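/- arXiv:2511.02224 — 3 statements merged into one kernel-verified Lean document; each statement's English description precedes it below -/
import Mathlib

section
/- Define f(p) := min{1 − p, 2p − 1}. Then for each p ∈ [0,1], the minimum of V(p, a, b) over (a, b) ∈ [0,1] × [0,1] equals f(p). -/
noncomputable def V (p a b : ℝ) : ℝ :=
  max (p * a + (1 - p) * (1 - 2 * b)) (p * b + (1 - p) * (1 - 2 * a))

noncomputable def f (p : ℝ) : ℝ := min (1 - p) (2 * p - 1)

theorem min_V_square_eq_f (p : ℝ) (hp : p ∈ Set.Icc (0 : ℝ) 1) :
    IsLeast ((fun ab : ℝ × ℝ => V p ab.1 ab.2) ''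
        (Set.Icc (0 : ℝ) 1 ×ˢ Set.Icc (0 : ℝ) 1)) (f p) := by
  obtain ⟨hp0, hp1⟩ := hp
  constructor
  · rcases le_total ((1:ℝ) - p) (2 * p - 1) with h | h
    · refine ⟨(0, 0), ⟨⟨le_refl _, zero_le_one⟩, ⟨le_refl _, zero_le_one⟩⟩, ?_⟩
      simp only [V, f]
      rw [min_eq_left h]
      rw [max_self]; ring
    · refine ⟨(1, 1), ⟨⟨zero_le_one, le_refl _⟩, ⟨zero_le_one, le_refl _⟩⟩, ?_⟩
      simp only [V, f]
      rw [min_eq_right h]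
      rw [max_self]; ring
  · rintro x ⟨⟨a, b⟩, ⟨⟨ha0, ha1⟩, ⟨hb0, hb1⟩⟩, rfl⟩
    simp only [V, f]
    have hA := le_max_left (p * a + (1 - p) * (1 - 2 * b)) (p * b + (1 - p) * (1 - 2 * a))
    have hB := le_max_right (p * a + (1 - p) * (1 - 2 * b)) (p * b + (1 - p) * (1 - 2 * a))
    rw [min_le_iff]
    rcases le_total p (2/3 : ℝ) with h | h
    · right; nlinarith
    · left; nlinarith
end

section
/- The point (1, 0, 0) is a strict local minimizer of V on [0,1]³: there exists δ > 0 such that for every (p, a, b) ∈ [0,1]³ with ‖(p, a, b) − (1, 0, 0)‖ ≤ δ and (p, a, b) ≠ (1, 0, 0), one has V(p, a, b) > V(1, 0, 0) = 0. -/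
theorem strict_local_min_V :
    V 1 0 0 = 0 ∧
    ∃ δ > (0 : ℝ), ∀ p ∈ Set.Icc (0 : ℝ) 1, ∀ a ∈ Set.Icc (0 : ℝ) 1,
      ∀ b ∈ Set.Icc (0 : ℝ) 1,
        Real.sqrt ((p - 1) ^ 2 + a ^ 2 + b ^ 2) ≤ δ → (p, a, b) ≠ (1, 0, 0) →
          V p a b > V 1 0 0 := by
  have hV0 : V 1 0 0 = 0 := by simp [V]
  refine ⟨hV0, 1/4, by norm_num, ?_⟩
  rintro p ⟨hp0, hp1⟩ a ⟨ha0, ha1⟩ b ⟨hb0, hb1⟩ hd hne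
  rw [hV0]
  have hnn : (0:ℝ) ≤ (p - 1) ^ 2 + a ^ 2 + b ^ 2 := by positivity
  have h2 : (p - 1) ^ 2 + a ^ 2 + b ^ 2 ≤ (1/4:ℝ)^2 := by
    nlinarith [Real.sq_sqrt hnn, Real.sqrt_nonneg ((p - 1) ^ 2 + a ^ 2 + b ^ 2)]
  have hpq : 1 - p ≤ 1/4 := by nlinarith
  have haq : a ≤ 1/4 := by nlinarith
  have hbq : b ≤ 1/4 := by nlinarith
  have hsum : 0 < (p * a + (1 - p) * (1 - 2 * b)) + (p * b + (1 - p) * (1 - 2 * a)) := by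
    rcases eq_or_lt_of_le hp1 with hp | hp
    · have : ¬ (a = 0 ∧ b = 0) := by
        intro ⟨ha, hb⟩; exact hne (by simp [hp, ha, hb])
      have hab : 0 < a + b := by
        rcases lt_or_eq_of_le ha0 with h | h
        · linarith
        · rcases lt_or_eq_of_le hb0 with h' | h'
          · linarith
          · exact absurd ⟨h.symm, h'.symm⟩ this
      nlinarith
    · nlinarith
  have : 0 < p * a + (1 - p) * (1 - 2 * b) ∨ 0 < p * b + (1 - p) * (1 - 2 * a) := by
    by_contra h
    push_neg at h
    linarith [h.1, h.2]
  exact lt_max_iff.mpr this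
end

section
/- The point (1, 0, 0) is a strict local minimizer of V on [0,1]³ but is not a global minimizer: there exists δ > 0 such that V(p, a, b) > V(1, 0, 0) for every (p, a, b) ∈ [0,1]³ with ‖(p, a, b) − (1, 0, 0)‖ ≤ δ and (p, a, b) ≠ (1, 0, 0), while V(1, 0, 0) = 0 > −1 = min over [0,1]³ of V. -/
theorem strict_local_min_not_global_V :
    (∃ δ > (0 : ℝ), ∀ p ∈ Set.Icc (0 : ℝ) 1, ∀ a ∈ Set.Icc (0 : ℝ) 1,
      ∀ b ∈ Set.Icc (0 : ℝ) 1,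
        Real.sqrt ((p - 1) ^ 2 + a ^ 2 + b ^ 2) ≤ δ → (p, a, b) ≠ (1, 0, 0) →
          V p a b > V 1 0 0) ∧
    V 1 0 0 = 0 ∧
    IsLeast ((fun x : ℝ × ℝ × ℝ => V x.1 x.2.1 x.2.2) ''
        (Set.Icc (0 : ℝ) 1 ×ˢ Set.Icc (0 : ℝ) 1 ×ˢ Set.Icc (0 : ℝ) 1)) (-1) := by
  have hV0 : V 1 0 0 = 0 := by simp [V]
  refine ⟨⟨1/4, by norm_num, ?_⟩, hV0, ?_, ?_⟩
  · rintro p ⟨hp0, hp1⟩ a ⟨ha0, ha1⟩ b ⟨hb0, hb1⟩ hs hne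
    rw [hV0]
    have hXnn : (0:ℝ) ≤ (p - 1) ^ 2 + a ^ 2 + b ^ 2 := by positivity
    have hX : (p - 1) ^ 2 + a ^ 2 + b ^ 2 ≤ 1/16 := by
      have := Real.sq_sqrt hXnn
      nlinarith [Real.sqrt_nonneg ((p - 1) ^ 2 + a ^ 2 + b ^ 2)]
    have hpq : 1 - p ≤ 1/4 := by nlinarith
    have haq : a ≤ 1/4 := by nlinarith
    have hbq : b ≤ 1/4 := by nlinarith
    by_cases hcase : p = 1 ∧ a = 0
    · obtain ⟨hp, ha⟩ := hcase
      have hb : b ≠ 0 := by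
        intro hb; apply hne; rw [hp, ha, hb]
      have hbpos : 0 < b := lt_of_le_of_ne hb0 (Ne.symm hb)
      have : 0 < p * b + (1 - p) * (1 - 2 * a) := by rw [hp, ha]; linarith
      exact lt_max_of_lt_right this
    · have hf : 0 < p * a + (1 - p) * (1 - 2 * b) := by
        rcases eq_or_lt_of_le ha0 with ha | ha
        · have hp : p < 1 := by
            rcases eq_or_lt_of_le hp1 with hp | hp
            · exact absurd ⟨hp, ha.symm⟩ hcase
            · exact hp
          nlinarith [mul_pos (by linarith : (0:ℝ) < 1 - p) (by linarith : (0:ℝ) < 1 - 2*b)]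
        · nlinarith [mul_pos (by linarith : (0:ℝ) < p) ha,
            mul_nonneg (by linarith : (0:ℝ) ≤ 1 - p) (by linarith : (0:ℝ) ≤ 1 - 2*b)]
      exact lt_max_of_lt_left hf
  · exact ⟨(0, 1, 1), by norm_num [Set.mem_prod, Prod.le_def], by norm_num [V]⟩
  · rintro v ⟨⟨p, a, b⟩, ⟨⟨hp0, hp1⟩, ⟨ha0, ha1⟩, ⟨hb0, hb1⟩⟩, rfl⟩
    simp only [V]
    have h1 : p * a + (1 - p) * (1 - 2 * b) ≤ max (p * a + (1 - p) * (1 - 2 * b)) (p * b + (1 - p) * (1 - 2 * a)) := le_max_left _ _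
    have h2 : p * b + (1 - p) * (1 - 2 * a) ≤ max (p * a + (1 - p) * (1 - 2 * b)) (p * b + (1 - p) * (1 - 2 * a)) := le_max_right _ _
    have hsum : -2 ≤ p * a + (1 - p) * (1 - 2 * b) + (p * b + (1 - p) * (1 - 2 * a)) := by
      nlinarith [mul_nonneg (by linarith : (0:ℝ) ≤ 1 - p) (by linarith : (0:ℝ) ≤ 2 - a - b),
        mul_nonneg hp0 (add_nonneg ha0 hb0)]
    linarith
end
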